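/- Let W = (x^2-1)(x^3 + a x^2 + b x + r) = x^5 + a x^4 + (b-1)x^3 + (r-a)x^2 - b x - r, with a > 0 and all displayed coefficients nonzero. If the number of sign changes of the coefficient sequence of W equals one plus the number of sign changes of (1, a, b, r), then the sign pattern of W contains one of the configurations (+,+,-,-), (-,-,+,+), (+,-,-,+), (-,+,+,-). -/

import Mathlib

/-!
From the top, the coefficients of `W` are `1, a, b - 1, r - a, -b, -r`. Splitting on the signs
of `r - a` and `b - 1` (and of `b` when `a < r` and `b < 1`), the window `(+,+,-,-)` or
`(-,+,+,-)` appears among them, except when `a < r` and `0 ≤ b < 1`. In that case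
`(1, a, b, r)` has no sign change while `W` has two, at `(b - 1, a)` and `(r - a, b - 1)`,
contradicting the hypothesis on sign changes.
-/

open Polynomial

/-- The number of sign changes in the coefficient sequence of a polynomial. -/
noncomputable def signChanges (Q : Polynomial ℝ) : ℕ :=
  ((Finset.range Q.natDegree).filter (fun j => Q.coeff j * Q.coeff (j + 1) < 0)).card

/-- The sign pattern of `Q` (read from leading coefficient to constant term) contains
one of the configurations `A = (+,+,-,-)`, `B = (-,-,+,+)`, `C = (+,-,-,+)`,
`D = (-,+,+,-)` in four consecutive positions. -/
def hasConfig (Q : Polynomial ℝ) : Prop :=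
  ∃ j, j + 3 ≤ Q.natDegree ∧
    ((0 < Q.coeff (Q.natDegree - j) ∧ 0 < Q.coeff (Q.natDegree - (j + 1)) ∧
        Q.coeff (Q.natDegree - (j + 2)) < 0 ∧ Q.coeff (Q.natDegree - (j + 3)) < 0) ∨
     (Q.coeff (Q.natDegree - j) < 0 ∧ Q.coeff (Q.natDegree - (j + 1)) < 0 ∧
        0 < Q.coeff (Q.natDegree - (j + 2)) ∧ 0 < Q.coeff (Q.natDegree - (j + 3))) ∨
     (0 < Q.coeff (Q.natDegree - j) ∧ Q.coeff (Q.natDegree - (j + 1)) < 0 ∧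
        Q.coeff (Q.natDegree - (j + 2)) < 0 ∧ 0 < Q.coeff (Q.natDegree - (j + 3))) ∨
     (Q.coeff (Q.natDegree - j) < 0 ∧ 0 < Q.coeff (Q.natDegree - (j + 1)) ∧
        0 < Q.coeff (Q.natDegree - (j + 2)) ∧ Q.coeff (Q.natDegree - (j + 3)) < 0))

noncomputable abbrev cubic (a b r : ℝ) : ℝ[X] := X ^ 3 + C a * X ^ 2 + C b * X + C r

theorem signChanges_eq_zero_of_coeff_nonneg {Q : ℝ[X]} (h : ∀ n, 0 ≤ Q.coeff n) :
    signChanges Q = 0 :=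
  Finset.card_eq_zero.2 <| Finset.filter_eq_empty_iff.2 fun j _ =>
    not_lt.2 (mul_nonneg (h j) (h (j + 1)))

theorem card_le_signChanges {Q : ℝ[X]} {s : Finset ℕ}
    (hs : ∀ j ∈ s, j < Q.natDegree ∧ Q.coeff j * Q.coeff (j + 1) < 0) :
    s.card ≤ signChanges Q :=
  Finset.card_le_card fun j hj =>
    Finset.mem_filter.2 ⟨Finset.mem_range.2 (hs j hj).1, (hs j hj).2⟩

theorem hasConfig_of_coeff_pos_pos_neg_neg {Q : ℝ[X]} {i : ℕ} (hi : i + 3 ≤ Q.natDegree)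
    (h3 : 0 < Q.coeff (i + 3)) (h2 : 0 < Q.coeff (i + 2)) (h1 : Q.coeff (i + 1) < 0)
    (h0 : Q.coeff i < 0) : hasConfig Q := by
  refine ⟨Q.natDegree - (i + 3), by omega, Or.inl ?_⟩
  rw [show Q.natDegree - (Q.natDegree - (i + 3)) = i + 3 by omega,
    show Q.natDegree - (Q.natDegree - (i + 3) + 1) = i + 2 by omega,
    show Q.natDegree - (Q.natDegree - (i + 3) + 2) = i + 1 by omega,
    show Q.natDegree - (Q.natDegree - (i + 3) + 3) = i by omega]
  exact ⟨h3, h2, h1, h0⟩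

theorem hasConfig_of_coeff_neg_pos_pos_neg {Q : ℝ[X]} {i : ℕ} (hi : i + 3 ≤ Q.natDegree)
    (h3 : Q.coeff (i + 3) < 0) (h2 : 0 < Q.coeff (i + 2)) (h1 : 0 < Q.coeff (i + 1))
    (h0 : Q.coeff i < 0) : hasConfig Q := by
  refine ⟨Q.natDegree - (i + 3), by omega, Or.inr (Or.inr (Or.inr ?_))⟩
  rw [show Q.natDegree - (Q.natDegree - (i + 3)) = i + 3 by omega,
    show Q.natDegree - (Q.natDegree - (i + 3) + 1) = i + 2 by omega,
    show Q.natDegree - (Q.natDegree - (i + 3) + 2) = i + 1 by omega,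
    show Q.natDegree - (Q.natDegree - (i + 3) + 3) = i by omega]
  exact ⟨h3, h2, h1, h0⟩

theorem coeff_cubic_nonneg {a b r : ℝ} (ha : 0 ≤ a) (hb : 0 ≤ b) (hr : 0 ≤ r) (n : ℕ) :
    0 ≤ (cubic a b r).coeff n := by
  simp only [cubic, coeff_add, coeff_X_pow, coeff_C_mul, coeff_X, coeff_C]
  split_ifs <;> linarith

section

variable (a b r : ℝ)

theorem natDegree_X_sq_sub_one_mul_cubic : ((X ^ 2 - 1) * cubic a b r).natDegree = 5 := by
  unfold cubic; compute_degree!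

theorem coeff_X_sq_sub_one_mul_cubic :
    ((X ^ 2 - 1) * cubic a b r).coeff 5 = 1 ∧ ((X ^ 2 - 1) * cubic a b r).coeff 4 = a ∧
      ((X ^ 2 - 1) * cubic a b r).coeff 3 = b - 1 ∧
      ((X ^ 2 - 1) * cubic a b r).coeff 2 = r - a ∧
      ((X ^ 2 - 1) * cubic a b r).coeff 1 = -b ∧ ((X ^ 2 - 1) * cubic a b r).coeff 0 = -r := by
  have hW : (X ^ 2 - 1) * cubic a b r =
      X ^ 5 + C a * X ^ 4 + (C b - 1) * X ^ 3 + (C r - C a) * X ^ 2 - C b * X - C r := by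
    unfold cubic; ring
  simp [hW, sub_mul, coeff_X]

end

theorem signChanges_X_sq_sub_one_mul_cubic_ne {a b r : ℝ} (ha : 0 < a) (hb : 0 ≤ b)
    (hb1 : b < 1) (hra : a < r) :
    signChanges ((X ^ 2 - 1) * cubic a b r) ≠ signChanges (cubic a b r) + 1 := by
  obtain ⟨-, h4, h3, h2, -, -⟩ := coeff_X_sq_sub_one_mul_cubic a b r
  have hP : signChanges (cubic a b r) = 0 :=
    signChanges_eq_zero_of_coeff_nonneg (coeff_cubic_nonneg ha.le hb (ha.trans hra).le)
  have hW : ({2, 3} : Finset ℕ).card ≤ signChanges ((X ^ 2 - 1) * cubic a b r) := by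
    refine card_le_signChanges fun j hj => ?_
    rw [natDegree_X_sq_sub_one_mul_cubic]
    rcases Finset.mem_insert.1 hj with rfl | hj
    · rw [h2, h3]; exact ⟨by norm_num, mul_neg_of_pos_of_neg (by linarith) (by linarith)⟩
    · rw [Finset.mem_singleton.1 hj, h3, h4]
      exact ⟨by norm_num, mul_neg_of_neg_of_pos (by linarith) ha⟩
  rw [hP]
  simp only [Finset.card_pair (by norm_num : (2 : ℕ) ≠ 3)] at hW
  omega

theorem degree_five_base_case_general (a b r : ℝ) (ha : 0 < a)
    (hb1 : b ≠ 1) (hra : r ≠ a)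
    (hsc : signChanges ((X ^ 2 - 1) * (X ^ 3 + C a * X ^ 2 + C b * X + C r)) =
      signChanges (X ^ 3 + C a * X ^ 2 + C b * X + C r) + 1) :
    hasConfig ((X ^ 2 - 1) * (X ^ 3 + C a * X ^ 2 + C b * X + C r)) := by
  show hasConfig ((X ^ 2 - 1) * cubic a b r)
  have hdeg := natDegree_X_sq_sub_one_mul_cubic a b r
  obtain ⟨h5, h4, h3, h2, h1, h0⟩ := coeff_X_sq_sub_one_mul_cubic a b r
  rcases hra.lt_or_gt with hra | hra
  · rcases hb1.lt_or_gt with hb1 | hb1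
    · refine hasConfig_of_coeff_pos_pos_neg_neg (i := 2) (by omega) ?_ ?_ ?_ ?_ <;>
        norm_num [h5, h4, h3, h2] <;> linarith
    · refine hasConfig_of_coeff_pos_pos_neg_neg (i := 1) (by omega) ?_ ?_ ?_ ?_ <;>
        norm_num [h4, h3, h2, h1] <;> linarith
  · rcases hb1.lt_or_gt with hb1 | hb1
    · rcases lt_or_ge b 0 with hb | hb
      · refine hasConfig_of_coeff_neg_pos_pos_neg (i := 0) (by omega) ?_ ?_ ?_ ?_ <;>
          norm_num [h3, h2, h1, h0] <;> linarith
      · exact absurd hsc (signChanges_X_sq_sub_one_mul_cubic_ne ha hb hb1 hra)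
    · refine hasConfig_of_coeff_pos_pos_neg_neg (i := 0) (by omega) ?_ ?_ ?_ ?_ <;>
        norm_num [h3, h2, h1, h0] <;> linarith

/-- Degree-5 base case: for `W = (x²-1)(x³ + a x² + b x + r)` with `a > 0` and all
coefficients of `W` nonzero, if the number of sign changes of `W` equals one plus the
number of sign changes of `(1, a, b, r)`, then the sign pattern of `W` contains one of
the configurations `(+,+,-,-)`, `(-,-,+,+)`, `(+,-,-,+)`, `(-,+,+,-)`. -/
theorem degree_five_base_case (a b r : ℝ) (ha : 0 < a) (hb : b ≠ 0) (hr : r ≠ 0)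
    (hb1 : b ≠ 1) (hra : r ≠ a)
    (hsc : signChanges ((X ^ 2 - 1) * (X ^ 3 + C a * X ^ 2 + C b * X + C r)) =
      signChanges (X ^ 3 + C a * X ^ 2 + C b * X + C r) + 1) :
    hasConfig ((X ^ 2 - 1) * (X ^ 3 + C a * X ^ 2 + C b * X + C r)) :=
  degree_five_base_case_general a b r ha hb1 hra hsc
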